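/- arXiv:2507.04637 — 2 statements merged into one kernel-verified Lean document; each statement's English description precedes it below -/
import Mathlib

section
/- Let α, β > 0, let ψ : (0,∞) → ℝ be such that Ψ(x) := ψ(e^x) is monotone nondecreasing and convex, and let p, q be nonnegative measurable functions on a measure space with all the relevant integrals finite and positive. Then (1/(β(α+β)))·ψ(∫ p^(α+β)) + (1/(α(α+β)))·ψ(∫ q^(α+β)) − (1/(αβ))·ψ(∫ p^α q^β) ≥ 0. -/
open Real MeasureTheory

/-!
With `w = α / (α + β)`, the integrand `p ^ α * q ^ β` is `(p ^ (α + β)) ^ w * (q ^ (α + β)) ^ (1 - w)`,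
so Hölder's inequality bounds `∫ p ^ α * q ^ β` by `(∫ p ^ (α + β)) ^ w * (∫ q ^ (α + β)) ^ (1 - w)`.
After taking logarithms, monotonicity and convexity of `ψ ∘ exp` turn this into
`ψ (∫ p ^ α * q ^ β) ≤ w * ψ (∫ p ^ (α + β)) + (1 - w) * ψ (∫ q ^ (α + β))`,
which is the claim multiplied by `α * β`.
-/

theorem integral_rpow_mul_rpow_le {A : Type*} [MeasurableSpace A] {μ : Measure A} {f g : A → ℝ}
    (hf0 : ∀ x, 0 ≤ f x) (hg0 : ∀ x, 0 ≤ g x) (hf : Integrable f μ) (hg : Integrable g μ)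
    {a b : ℝ} (ha : 0 ≤ a) (hb : 0 ≤ b) (hab : a + b = 1) :
    ∫ x, f x ^ a * g x ^ b ∂μ ≤ (∫ x, f x ∂μ) ^ a * (∫ x, g x ∂μ) ^ b := by
  have hfg_meas : AEStronglyMeasurable (fun x => f x ^ a * g x ^ b) μ :=
    ((hf.aemeasurable.pow_const a).mul (hg.aemeasurable.pow_const b)).aestronglyMeasurable
  have hfinite : (∫⁻ x, ENNReal.ofReal (f x) ∂μ) ^ a * (∫⁻ x, ENNReal.ofReal (g x) ∂μ) ^ b ≠ ⊤ :=
    ENNReal.mul_ne_top (ENNReal.rpow_ne_top_of_nonneg ha hf.lintegral_lt_top.ne)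
      (ENNReal.rpow_ne_top_of_nonneg hb hg.lintegral_lt_top.ne)
  calc ∫ x, f x ^ a * g x ^ b ∂μ
      = (∫⁻ x, ENNReal.ofReal (f x) ^ a * ENNReal.ofReal (g x) ^ b ∂μ).toReal := by
        rw [integral_eq_lintegral_of_nonneg_ae
          (.of_forall fun x => mul_nonneg (rpow_nonneg (hf0 x) a) (rpow_nonneg (hg0 x) b))
          hfg_meas]
        simp_rw [ENNReal.ofReal_rpow_of_nonneg (hf0 _) ha, ENNReal.ofReal_rpow_of_nonneg (hg0 _) hb,
          ENNReal.ofReal_mul (rpow_nonneg (hf0 _) a)]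
    _ ≤ ((∫⁻ x, ENNReal.ofReal (f x) ∂μ) ^ a * (∫⁻ x, ENNReal.ofReal (g x) ∂μ) ^ b).toReal :=
        ENNReal.toReal_mono hfinite <| ENNReal.lintegral_mul_norm_pow_le
          hf.aemeasurable.ennreal_ofReal hg.aemeasurable.ennreal_ofReal ha hb hab
    _ = (∫ x, f x ∂μ) ^ a * (∫ x, g x ∂μ) ^ b := by
        rw [ENNReal.toReal_mul, ← ENNReal.toReal_rpow, ← ENNReal.toReal_rpow,
          ← integral_eq_lintegral_of_nonneg_ae (.of_forall hf0) hf.1,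
          ← integral_eq_lintegral_of_nonneg_ae (.of_forall hg0) hg.1]

theorem map_le_add_of_le_rpow_mul_rpow {ψ : ℝ → ℝ}
    (hmono : Monotone (fun x : ℝ => ψ (Real.exp x)))
    (hconv : ConvexOn ℝ Set.univ (fun x : ℝ => ψ (Real.exp x)))
    {x y z a b : ℝ} (hx : 0 < x) (hy : 0 < y) (hz : 0 < z) (ha : 0 ≤ a) (hb : 0 ≤ b)
    (hab : a + b = 1) (hzxy : z ≤ x ^ a * y ^ b) :
    ψ z ≤ a * ψ x + b * ψ y := by
  have hlog : log z ≤ a * log x + b * log y := by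
    calc log z ≤ log (x ^ a * y ^ b) := log_le_log hz hzxy
      _ = a * log x + b * log y := by
        rw [log_mul (by positivity) (by positivity), log_rpow hx, log_rpow hy]
  calc ψ z = ψ (exp (log z)) := by rw [exp_log hz]
    _ ≤ ψ (exp (a * log x + b * log y)) := hmono hlog
    _ ≤ a * ψ (exp (log x)) + b * ψ (exp (log y)) :=
        hconv.2 (Set.mem_univ _) (Set.mem_univ _) ha hb hab
    _ = a * ψ x + b * ψ y := by rw [exp_log hx, exp_log hy]

theorem gab_nonneg_pos_case_general
    {A : Type*} [MeasurableSpace A] (μ : Measure A)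
    (α β : ℝ) (hα : 0 < α) (hβ : 0 < β)
    (ψ : ℝ → ℝ)
    (hΨmono : Monotone (fun x : ℝ => ψ (Real.exp x)))
    (hΨconv : ConvexOn ℝ Set.univ (fun x : ℝ => ψ (Real.exp x)))
    (p q : A → ℝ)
    (hp0 : ∀ a, 0 ≤ p a) (hq0 : ∀ a, 0 ≤ q a)
    (hpint : Integrable (fun a => p a ^ (α + β)) μ)
    (hqint : Integrable (fun a => q a ^ (α + β)) μ)
    (hppos : 0 < ∫ a, p a ^ (α + β) ∂μ)
    (hqpos : 0 < ∫ a, q a ^ (α + β) ∂μ)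
    (hpqpos : 0 < ∫ a, p a ^ α * q a ^ β ∂μ) :
    0 ≤ (1 / (β * (α + β))) * ψ (∫ a, p a ^ (α + β) ∂μ)
        + (1 / (α * (α + β))) * ψ (∫ a, q a ^ (α + β) ∂μ)
        - (1 / (α * β)) * ψ (∫ a, p a ^ α * q a ^ β ∂μ) := by
  have hαβ : 0 < α + β := by linarith
  have hweights : α / (α + β) + β / (α + β) = 1 := by field_simp
  have hsplit : ∀ (x : ℝ) {c : ℝ}, 0 ≤ x → 0 < c → x ^ c = (x ^ (α + β)) ^ (c / (α + β)) :=
    fun x c hx _ => by rw [← rpow_mul hx, mul_div_cancel₀ _ hαβ.ne']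
  have hholder : ∫ a, p a ^ α * q a ^ β ∂μ ≤
      (∫ a, p a ^ (α + β) ∂μ) ^ (α / (α + β)) * (∫ a, q a ^ (α + β) ∂μ) ^ (β / (α + β)) := by
    simp_rw [hsplit (p _) (hp0 _) hα, hsplit (q _) (hq0 _) hβ]
    exact integral_rpow_mul_rpow_le (fun a => rpow_nonneg (hp0 a) _)
      (fun a => rpow_nonneg (hq0 a) _) hpint hqint (by positivity) (by positivity) hweights
  have hψ := map_le_add_of_le_rpow_mul_rpow hΨmono hΨconv hppos hqpos hpqpos
    (by positivity) (by positivity) hweights hholder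
  calc (0 : ℝ) ≤ 1 / (α * β) * (α / (α + β) * ψ (∫ a, p a ^ (α + β) ∂μ)
          + β / (α + β) * ψ (∫ a, q a ^ (α + β) ∂μ) - ψ (∫ a, p a ^ α * q a ^ β ∂μ)) :=
        mul_nonneg (by positivity) (sub_nonneg.2 hψ)
    _ = _ := by field_simp

theorem gab_nonneg_pos_case
    {A : Type*} [MeasurableSpace A] (μ : Measure A)
    (α β : ℝ) (hα : 0 < α) (hβ : 0 < β)
    (ψ : ℝ → ℝ)
    (hΨmono : Monotone (fun x : ℝ => ψ (Real.exp x)))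
    (hΨconv : ConvexOn ℝ Set.univ (fun x : ℝ => ψ (Real.exp x)))
    (p q : A → ℝ) (hp : Measurable p) (hq : Measurable q)
    (hp0 : ∀ a, 0 ≤ p a) (hq0 : ∀ a, 0 ≤ q a)
    (hpint : Integrable (fun a => p a ^ (α + β)) μ)
    (hqint : Integrable (fun a => q a ^ (α + β)) μ)
    (hpqint : Integrable (fun a => p a ^ α * q a ^ β) μ)
    (hppos : 0 < ∫ a, p a ^ (α + β) ∂μ)
    (hqpos : 0 < ∫ a, q a ^ (α + β) ∂μ)
    (hpqpos : 0 < ∫ a, p a ^ α * q a ^ β ∂μ) :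
    0 ≤ (1 / (β * (α + β))) * ψ (∫ a, p a ^ (α + β) ∂μ)
        + (1 / (α * (α + β))) * ψ (∫ a, q a ^ (α + β) ∂μ)
        - (1 / (α * β)) * ψ (∫ a, p a ^ α * q a ^ β ∂μ) :=
  gab_nonneg_pos_case_general μ α β hα hβ ψ hΨmono hΨconv p q hp0 hq0 hpint hqint hppos hqpos hpqpos
end

section
/- Let a < 0 and suppose Ψ(x) := ψ(e^x) is nondecreasing and convex. Then the map p ↦ ψ(‖p‖_a^a) = ψ(Σᵢ pᵢ^a) is convex on the set of vectors with strictly positive entries. Likewise, if a > 1 and ψ itself is nondecreasing and convex, then p ↦ ψ(Σᵢ pᵢ^a) is convex. -/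
/-!
For `a > 1` each `p ↦ p i ^ a` is convex, hence so is their sum, and composing with a
nondecreasing convex `ψ` preserves convexity.

For `a < 0` the sum `S p = ∑ i, p i ^ a` is log-convex: each term `exp (a * log (p i))` is, and by
Hölder's inequality `∑ fᵢ ^ λ gᵢ ^ μ ≤ (∑ fᵢ) ^ λ (∑ gᵢ) ^ μ` a sum of log-convex functions is
log-convex. Then `ψ (S p) = Ψ (log (S p))` with `Ψ = ψ ∘ exp` nondecreasing and convex.
-/

open Finset Real Set

section

variable {ι 𝕜 E β : Type*}

theorem ConvexOn.finset_sum [Semiring 𝕜] [PartialOrder 𝕜] [AddCommMonoid E] [AddCommMonoid β]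
    [PartialOrder β] [IsOrderedAddMonoid β] [SMul 𝕜 E] [Module 𝕜 β] {s : Set E} {t : Finset ι}
    {f : ι → E → β} (hs : Convex 𝕜 s) (hf : ∀ i ∈ t, ConvexOn 𝕜 s (f i)) :
    ConvexOn 𝕜 s fun x => ∑ i ∈ t, f i x := by
  rw [← sum_fn]
  exact sum_induction f (ConvexOn 𝕜 s) (fun _ _ => ConvexOn.add) (convexOn_const 0 hs) hf

theorem ConvexOn.comp_of_monotone [AddCommMonoid E] [SMul ℝ E] {s : Set E} {f : E → ℝ}
    {g : ℝ → ℝ} (hg : ConvexOn ℝ univ g) (hg_mono : Monotone g) (hf : ConvexOn ℝ s f) :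
    ConvexOn ℝ s (g ∘ f) :=
  ⟨hf.1, fun _ hx _ hy _ _ ha hb hab =>
    (hg_mono (hf.2 hx hy ha hb hab)).trans (hg.2 trivial trivial ha hb hab)⟩

theorem Real.sum_rpow_mul_rpow_le_of_nonneg {t : Finset ι} {f g : ι → ℝ}
    (hf : ∀ i ∈ t, 0 ≤ f i) (hg : ∀ i ∈ t, 0 ≤ g i) {a b : ℝ} (ha : 0 < a) (hb : 0 < b)
    (hab : a + b = 1) :
    ∑ i ∈ t, f i ^ a * g i ^ b ≤ (∑ i ∈ t, f i) ^ a * (∑ i ∈ t, g i) ^ b := by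
  have holder := inner_le_Lp_mul_Lq_of_nonneg t (holderConjugate_one_div ha hb hab)
    (fun i hi => rpow_nonneg (hf i hi) a) (fun i hi => rpow_nonneg (hg i hi) b)
  simp only [one_div, inv_inv] at holder
  rwa [sum_congr rfl fun i hi => rpow_rpow_inv (hf i hi) ha.ne',
    sum_congr rfl fun i hi => rpow_rpow_inv (hg i hi) hb.ne'] at holder

variable [AddCommGroup E] [Module ℝ E] {s : Set E}

theorem ConvexOn.le_rpow_mul_rpow_of_log {h : E → ℝ} (hh : ConvexOn ℝ s fun x => log (h x))
    (h_pos : ∀ x ∈ s, 0 < h x) {x y : E} (hx : x ∈ s) (hy : y ∈ s) {a b : ℝ} (ha : 0 ≤ a)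
    (hb : 0 ≤ b) (hab : a + b = 1) : h (a • x + b • y) ≤ h x ^ a * h y ^ b := by
  have hx₀ := h_pos x hx
  have hy₀ := h_pos y hy
  rw [← log_le_log_iff (h_pos _ (hh.1 hx hy ha hb hab)) (by positivity),
    log_mul (by positivity) (by positivity), log_rpow hx₀, log_rpow hy₀]
  exact hh.2 hx hy ha hb hab

theorem convexOn_log_sum_of_convexOn_log {t : Finset ι} {f : ι → E → ℝ} (ht : t.Nonempty)
    (hf_pos : ∀ i ∈ t, ∀ x ∈ s, 0 < f i x) (hf : ∀ i ∈ t, ConvexOn ℝ s fun x => log (f i x)) :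
    ConvexOn ℝ s fun x => log (∑ i ∈ t, f i x) := by
  obtain ⟨i₀, hi₀⟩ := ht
  have hs : Convex ℝ s := (hf i₀ hi₀).1
  have hsum_pos : ∀ x ∈ s, 0 < ∑ i ∈ t, f i x := fun x hx =>
    sum_pos (fun i hi => hf_pos i hi x hx) ⟨i₀, hi₀⟩
  refine convexOn_iff_forall_pos.2 ⟨hs, fun x hx y hy a b ha hb hab => ?_⟩
  have hx₀ := hsum_pos x hx
  have hy₀ := hsum_pos y hy
  calc log (∑ i ∈ t, f i (a • x + b • y))
      ≤ log ((∑ i ∈ t, f i x) ^ a * (∑ i ∈ t, f i y) ^ b) := by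
        refine log_le_log (hsum_pos _ (hs hx hy ha.le hb.le hab)) ?_
        calc ∑ i ∈ t, f i (a • x + b • y) ≤ ∑ i ∈ t, f i x ^ a * f i y ^ b :=
              sum_le_sum fun i hi => (hf i hi).le_rpow_mul_rpow_of_log (hf_pos i hi) hx hy
                ha.le hb.le hab
          _ ≤ (∑ i ∈ t, f i x) ^ a * (∑ i ∈ t, f i y) ^ b :=
              sum_rpow_mul_rpow_le_of_nonneg (fun i hi => (hf_pos i hi x hx).le)
                (fun i hi => (hf_pos i hi y hy).le) ha hb hab
    _ = a • log (∑ i ∈ t, f i x) + b • log (∑ i ∈ t, f i y) := by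
        rw [log_mul (by positivity) (by positivity), log_rpow hx₀, log_rpow hy₀, smul_eq_mul,
          smul_eq_mul]

end

theorem convexOn_log_rpow {a : ℝ} (ha : a ≤ 0) : ConvexOn ℝ (Ioi 0) fun x : ℝ => log (x ^ a) :=
  ((neg_convexOn_iff.2 strictConcaveOn_log_Ioi.concaveOn).smul (neg_nonneg.2 ha)).congr
    fun x hx => by simp [log_rpow (mem_Ioi.1 hx)]

theorem convex_setOf_forall_pos {ι : Type*} : Convex ℝ {p : ι → ℝ | ∀ i, 0 < p i} := by
  simpa [Set.pi] using convex_pi (s := univ) fun _ _ => convex_Ioi (0 : ℝ)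

theorem ConvexOn.comp_eval_of_Ioi_subset {ι : Type*} {g : ℝ → ℝ} {t : Set ℝ}
    (hg : ConvexOn ℝ t g) (ht : Set.Ioi (0 : ℝ) ⊆ t) (i : ι) :
    ConvexOn ℝ {p : ι → ℝ | ∀ i, 0 < p i} fun p => g (p i) :=
  (hg.comp_linearMap (LinearMap.proj (R := ℝ) (φ := fun _ : ι => ℝ) i)).subset
    (fun _ hp => ht (hp i)) convex_setOf_forall_pos

section

variable {ι : Type*} [Fintype ι]

theorem convexOn_sum_rpow {a : ℝ} (ha : 1 ≤ a) :
    ConvexOn ℝ {p : ι → ℝ | ∀ i, 0 < p i} fun p => ∑ i, p i ^ a :=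
  ConvexOn.finset_sum convex_setOf_forall_pos fun i _ =>
    (convexOn_rpow ha).comp_eval_of_Ioi_subset Ioi_subset_Ici_self i

theorem convexOn_log_sum_rpow [Nonempty ι] {a : ℝ} (ha : a ≤ 0) :
    ConvexOn ℝ {p : ι → ℝ | ∀ i, 0 < p i} fun p => log (∑ i, p i ^ a) :=
  convexOn_log_sum_of_convexOn_log univ_nonempty (fun i _ _ hp => rpow_pos_of_pos (hp i) a)
    fun i _ => (convexOn_log_rpow ha).comp_eval_of_Ioi_subset subset_rfl i

end

theorem psi_norm_convex
    (n : ℕ) (a : ℝ) (ψ : ℝ → ℝ) :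
    ((a < 0 → Monotone (fun x : ℝ => ψ (Real.exp x)) →
        ConvexOn ℝ Set.univ (fun x : ℝ => ψ (Real.exp x)) →
        ConvexOn ℝ {p : Fin n → ℝ | ∀ i, 0 < p i} (fun p => ψ (∑ i, p i ^ a)))
      ∧ (1 < a → Monotone ψ → ConvexOn ℝ Set.univ ψ →
        ConvexOn ℝ {p : Fin n → ℝ | ∀ i, 0 < p i} (fun p => ψ (∑ i, p i ^ a)))) := by
  refine ⟨fun ha hmono hconv => ?_, fun ha hmono hconv =>
    hconv.comp_of_monotone hmono (convexOn_sum_rpow ha.le)⟩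
  cases isEmpty_or_nonempty (Fin n)
  · simpa using convexOn_const (ψ 0) (convex_setOf_forall_pos (ι := Fin n))
  · refine (hconv.comp_of_monotone hmono (convexOn_log_sum_rpow ha.le)).congr fun p hp => ?_
    rw [Function.comp_apply, exp_log (sum_pos (fun i _ => rpow_pos_of_pos (hp i) a) univ_nonempty)]
end
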